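/- The elasticity of any Leamer monoid S_Γ^s is infinite: for every real number R, there exists a nonzero element (x,n) ∈ S_Γ^s whose maximum factorization length divided by its minimum factorization length exceeds R. -/

import Mathlib

/-- The Leamer monoid as a subset of ℕ × ℕ: (0,0) together with all (x,n), n ≥ 1,
such that x + i*s ∈ Γ for all 0 ≤ i ≤ n. -/
def Leamer (Γ : AddSubmonoid ℕ) (s : ℕ) : Set (ℕ × ℕ) :=
  {p | p = (0, 0) ∨ (1 ≤ p.2 ∧ ∀ i ≤ p.2, p.1 + i * s ∈ Γ)}

/-- An irreducible (atom) of a subset S of ℕ × ℕ: a nonzero element of S that is not the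
sum of two nonzero elements of S. -/
def LIrred (S : Set (ℕ × ℕ)) (z : ℕ × ℕ) : Prop :=
  z ∈ S ∧ z ≠ 0 ∧ ∀ a b : ℕ × ℕ, a ∈ S → b ∈ S → a ≠ 0 → b ≠ 0 → z ≠ a + b

/-- A reducible element of S: an element of S that is the sum of two nonzero elements of S. -/
def LReducible (S : Set (ℕ × ℕ)) (z : ℕ × ℕ) : Prop :=
  z ∈ S ∧ ∃ a b : ℕ × ℕ, a ∈ S ∧ b ∈ S ∧ a ≠ 0 ∧ b ≠ 0 ∧ z = a + b

/-- The set of factorization lengths of z into irreducibles of S. -/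
def LSet (S : Set (ℕ × ℕ)) (z : ℕ × ℕ) : Set ℕ :=
  {r | ∃ l : Multiset (ℕ × ℕ), Multiset.card l = r ∧ (∀ a ∈ l, LIrred S a) ∧ l.sum = z}

/-- The Delta set of z: differences of successive factorization lengths. -/
def LDelta (S : Set (ℕ × ℕ)) (z : ℕ × ℕ) : Set ℕ :=
  {d | ∃ a b, a ∈ LSet S z ∧ b ∈ LSet S z ∧ a < b ∧
    (∀ c, a < c → c < b → c ∉ LSet S z) ∧ d = b - a}

/-- The Delta set of the monoid S. -/
def LDeltaMonoid (S : Set (ℕ × ℕ)) : Set ℕ :=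
  {d | ∃ z, z ∈ S ∧ z ≠ 0 ∧ d ∈ LDelta S z}

/-- The Frobenius number of a numerical monoid Γ. -/
noncomputable def Frob (Γ : AddSubmonoid ℕ) : ℕ := sSup {x | x ∉ Γ}

/-- The numerical monoid generated by the arithmetic sequence m, m+s, ..., m+ks. -/
def ArithGamma (m k s : ℕ) : AddSubmonoid ℕ :=
  AddSubmonoid.closure {v | ∃ j ≤ k, v = m + j * s}

/-! A column `(x, N)` whose base `x` is the least one with `x + i * s ∈ Γ` for every `i` is an atom
as soon as `N > 2 · Frob Γ`: in a splitting, one summand is taller than `Frob Γ`, so its column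
continues forever and its base is at least `x`, while every nonzero element has positive base
because `s ∉ Γ`. Hence `(N + 1) • (x, 1) = (x, N) + (N * x, 1)` has factorizations of lengths
`N + 1` and `2`; no factorization is longer than the height `N + 1`, none shorter than `2`. -/

theorem mem_of_frob_lt {Γ : AddSubmonoid ℕ} (hΓ : {x : ℕ | x ∉ Γ}.Finite) {x : ℕ}
    (hx : Frob Γ < x) : x ∈ Γ := by
  by_contra hxΓ
  exact (le_csSup hΓ.bddAbove hxΓ).not_gt hx

theorem LSet.two_le_of_lReducible {S : Set (ℕ × ℕ)} {z : ℕ × ℕ} (hz : LReducible S z) {r : ℕ}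
    (hr : r ∈ LSet S z) : 2 ≤ r := by
  obtain ⟨-, a, b, ha, hb, ha0, hb0, rfl⟩ := hz
  obtain ⟨l, rfl, hl, hsum⟩ := hr
  by_contra! hcard
  interval_cases hlen : Multiset.card l
  · rw [Multiset.card_eq_zero.mp hlen, Multiset.sum_zero, eq_comm, add_eq_zero] at hsum
    exact ha0 hsum.1
  · obtain ⟨w, rfl⟩ := Multiset.card_eq_one.mp hlen
    rw [Multiset.sum_singleton] at hsum
    exact (hl w (Multiset.mem_singleton_self w)).2.2 a b ha hb ha0 hb0 hsum

namespace Leamer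

variable {Γ : AddSubmonoid ℕ} {s : ℕ}

theorem one_le_snd {p : ℕ × ℕ} (hp : p ∈ Leamer Γ s) (hp0 : p ≠ 0) : 1 ≤ p.2 :=
  (hp.resolve_left hp0).1

theorem one_le_fst (hs : s ∉ Γ) {p : ℕ × ℕ} (hp : p ∈ Leamer Γ s) (hp0 : p ≠ 0) : 1 ≤ p.1 := by
  obtain ⟨h1, hcol⟩ := hp.resolve_left hp0
  refine Nat.one_le_iff_ne_zero.mpr fun h0 => hs ?_
  simpa [h0] using hcol 1 h1

theorem mk_one_mem {x : ℕ} (hx : x ∈ Γ) (hxs : x + s ∈ Γ) : (x, 1) ∈ Leamer Γ s := by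
  refine Or.inr ⟨le_rfl, fun i hi => ?_⟩
  interval_cases i <;> simpa

theorem lIrred_mk_one {x : ℕ} (hx : x ∈ Γ) (hxs : x + s ∈ Γ) : LIrred (Leamer Γ s) (x, 1) := by
  refine ⟨mk_one_mem hx hxs, by simp [Prod.ext_iff], fun a b ha hb ha0 hb0 hab => ?_⟩
  have := one_le_snd ha ha0
  have := one_le_snd hb hb0
  have := congrArg Prod.snd hab
  simp only [Prod.snd_add] at this
  omega

theorem lIrred_mul_mk_one {x N : ℕ} (hx : x ∈ Γ) (hxs : x + s ∈ Γ) (hN : 1 ≤ N) :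
    LIrred (Leamer Γ s) (N * x, 1) := by
  obtain ⟨k, rfl⟩ : ∃ k, N = k + 1 := ⟨N - 1, by omega⟩
  have hkx : k * x ∈ Γ := by simpa using Γ.nsmul_mem hx k
  refine lIrred_mk_one (by simpa [add_mul] using Γ.add_mem hkx hx) ?_
  simpa [add_mul, add_assoc] using Γ.add_mem hkx hxs

theorem add_mem {p q : ℕ × ℕ} (hp : p ∈ Leamer Γ s) (hq : q ∈ Leamer Γ s) :
    p + q ∈ Leamer Γ s := by
  rcases hp with rfl | ⟨hp1, hp⟩
  · rwa [Prod.mk_zero_zero, zero_add]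
  rcases hq with rfl | ⟨-, hq⟩
  · rw [Prod.mk_zero_zero, add_zero]; exact Or.inr ⟨hp1, hp⟩
  refine Or.inr ⟨le_add_right hp1, fun i hi => ?_⟩
  have hsplit : p.1 + q.1 + i * s = (p.1 + min i p.2 * s) + (q.1 + (i - min i p.2) * s) := by
    have : i = min i p.2 + (i - min i p.2) := by omega
    nth_rw 1 [this]
    ring
  simpa [hsplit] using Γ.add_mem (hp _ (min_le_right _ _)) (hq _ (by simp at hi ⊢; omega))

theorem le_snd_of_mem_LSet {z : ℕ × ℕ} {r : ℕ} (hr : r ∈ LSet (Leamer Γ s) z) : r ≤ z.2 := by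
  obtain ⟨l, rfl, hl, rfl⟩ := hr
  have hsnd : ∀ y ∈ l.map Prod.snd, 1 ≤ y := by
    simp only [Multiset.mem_map]
    rintro _ ⟨p, hp, rfl⟩
    exact one_le_snd (hl p hp).1 (hl p hp).2.1
  have hsum : l.sum.2 = (l.map Prod.snd).sum := (AddMonoidHom.snd ℕ ℕ).map_multiset_sum l
  simpa [hsum] using Multiset.card_nsmul_le_sum hsnd

def fullColumnBases (Γ : AddSubmonoid ℕ) (s : ℕ) : Set ℕ := {x | ∀ i, x + i * s ∈ Γ}

theorem mk_mem_of_mem_fullColumnBases {x n : ℕ} (hx : x ∈ fullColumnBases Γ s) (hn : 1 ≤ n) :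
    (x, n) ∈ Leamer Γ s :=
  Or.inr ⟨hn, fun i _ => hx i⟩

theorem frob_succ_mem_fullColumnBases (hΓ : {x : ℕ | x ∉ Γ}.Finite) :
    Frob Γ + 1 ∈ fullColumnBases Γ s :=
  fun _ => mem_of_frob_lt hΓ (by omega)

theorem mem_fullColumnBases_of_frob_lt (hΓ : {x : ℕ | x ∉ Γ}.Finite) (hs : 1 ≤ s) {p : ℕ × ℕ}
    (hp : p ∈ Leamer Γ s) (hp0 : p ≠ 0) (htall : Frob Γ < p.2) : p.1 ∈ fullColumnBases Γ s := by
  intro i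
  rcases le_or_gt i p.2 with hi | hi
  · exact (hp.resolve_left hp0).2 i hi
  · exact mem_of_frob_lt hΓ (by nlinarith)

theorem lIrred_sInf_fullColumnBases (hΓ : {x : ℕ | x ∉ Γ}.Finite) (hs : s ∉ Γ) {N : ℕ}
    (hN : 2 * Frob Γ < N) : LIrred (Leamer Γ s) (sInf (fullColumnBases Γ s), N) := by
  have hs1 : 1 ≤ s := Nat.one_le_iff_ne_zero.mpr fun h => hs (h ▸ Γ.zero_mem)
  have hle : ∀ {p : ℕ × ℕ}, p ∈ Leamer Γ s → p ≠ 0 → Frob Γ < p.2 →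
      sInf (fullColumnBases Γ s) ≤ p.1 :=
    fun hp hp0 htall => Nat.sInf_le (mem_fullColumnBases_of_frob_lt hΓ hs1 hp hp0 htall)
  have hbase := Nat.sInf_mem ⟨_, frob_succ_mem_fullColumnBases (s := s) hΓ⟩
  refine ⟨mk_mem_of_mem_fullColumnBases hbase (by omega),
    ne_of_apply_ne Prod.snd (by simp; omega), fun a b ha hb ha0 hb0 hab => ?_⟩
  have ha1 := one_le_fst hs ha ha0
  have hb1 := one_le_fst hs hb hb0
  obtain ⟨hfst, hsnd⟩ := Prod.ext_iff.mp hab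
  simp only [Prod.fst_add, Prod.snd_add] at hfst hsnd
  rcases lt_or_ge (Frob Γ) a.2 with htall | hshort
  · have := hle ha ha0 htall
    omega
  · have := hle hb hb0 (by omega)
    omega

end Leamer

open Leamer in
theorem stmt8 (Γ : AddSubmonoid ℕ) (hΓ : {x : ℕ | x ∉ Γ}.Finite) (s : ℕ) (hs : s ∉ Γ)
    (R : ℝ) :
    ∃ z : ℕ × ℕ, z ∈ Leamer Γ s ∧ z ≠ 0 ∧
      ∃ a b : ℕ, a ∈ LSet (Leamer Γ s) z ∧ b ∈ LSet (Leamer Γ s) z ∧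
        (∀ r ∈ LSet (Leamer Γ s) z, r ≤ a) ∧ (∀ r ∈ LSet (Leamer Γ s) z, b ≤ r) ∧
        R < (a : ℝ) / (b : ℝ) := by
  set x := sInf (fullColumnBases Γ s)
  have hxcol : x ∈ fullColumnBases Γ s := Nat.sInf_mem ⟨_, frob_succ_mem_fullColumnBases hΓ⟩
  set N := 2 * Frob Γ + 1 + 2 * ⌈R⌉₊
  have htall : LIrred (Leamer Γ s) (x, N) := lIrred_sInf_fullColumnBases hΓ hs (by omega)
  have hx : x ∈ Γ := by simpa using hxcol 0
  have hxs : x + s ∈ Γ := by simpa using hxcol 1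
  have hshort : LIrred (Leamer Γ s) (N * x, 1) := lIrred_mul_mk_one hx hxs (by omega)
  have hsplit : (N * x + x, N + 1) = (x, N) + (N * x, 1) := by ext <;> simp [add_comm]
  have hred : LReducible (Leamer Γ s) (N * x + x, N + 1) := ⟨hsplit ▸ add_mem htall.1 hshort.1,
    _, _, htall.1, hshort.1, htall.2.1, hshort.2.1, hsplit⟩
  refine ⟨_, hred.1, ne_of_apply_ne Prod.snd (by simp), N + 1, 2,
    ⟨Multiset.replicate (N + 1) (x, 1), Multiset.card_replicate _ _,
      fun a ha => Multiset.eq_of_mem_replicate ha ▸ lIrred_mk_one hx hxs,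
      by rw [Multiset.sum_replicate, succ_nsmul]; simp⟩,
    ⟨{(x, N), (N * x, 1)}, rfl, by simp [htall, hshort], hsplit.symm⟩,
    fun r hr => le_snd_of_mem_LSet hr, fun r hr => LSet.two_le_of_lReducible hred hr, ?_⟩
  rw [lt_div_iff₀ two_pos]
  have := Nat.le_ceil R
  simp only [N]
  push_cast
  linarith
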